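/- Two-dimensional degeneracy bound for entangled quasicoherent states: let Λ = |O⟩⊗|Λ⁰⟩ + |I⟩⊗|Λ¹⟩ ∈ ℂ² ⊗ H with (|O⟩,|I⟩) an orthonormal basis of ℂ², and suppose ρ_Λ = tr_H |Λ⟩⟨Λ| is invertible (det ρ_Λ ≠ 0). Then the sesquilinear form on ℂ⁴ ≅ ℂ² ⊗ ℂ² given by ⟨v, (ρ_Λᵀ ⊗ id) w⟩ is a positive definite inner product. Consequently, a family of vectors of the form (u ⊗ id_H)Λ with u ∈ U(2), pairwise orthogonal in ℂ² ⊗ H, has at most 4 elements (since their 'ℂ⁴ coordinate' pairs (u|O⟩, u|I⟩) are pairwise orthogonal for this inner product). -/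

import Mathlib

/-
Write `Λ = ∑ⱼ |j⟩ ⊗ Λʲ`. The linear map `v ↦ ∑ⱼₗ vⱼₗ |l⟩ ⊗ Λʲ` from `ℂ² ⊗ ℂ²` to `ℂ² ⊗ H` pulls the
inner product of `ℂ² ⊗ H` back to the form `⟨v, (ρ_Λᵀ ⊗ id) w⟩`. Since the Gram matrix of
`Λ⁰, Λ¹` is `ρ_Λᵀ`, invertibility of `ρ_Λ` makes `Λ⁰, Λ¹` linearly independent, so this map is
injective and the pulled-back form is an inner product. The vector `(u ⊗ id)Λ` is the image of
`uᵀ`, so pairwise orthogonal such vectors come from linearly independent elements of `ℂ⁴`.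
-/

open Matrix

noncomputable section

variable {H : Type*} [NormedAddCommGroup H] [InnerProductSpace ℂ H]

/-- Action of u ⊗ id_H on ℂ² ⊗ H ≅ H ⊕ H for a 2×2 complex matrix u. -/
def actU (M : Matrix (Fin 2) (Fin 2) ℂ) (v : PiLp 2 fun _ : Fin 2 => H) :
    PiLp 2 fun _ : Fin 2 => H :=
  WithLp.toLp 2 (fun j => ∑ k, M j k • v k)

open scoped InnerProductSpace ComplexConjugate

section TensorMap

variable {𝕜 E ι κ : Type*} [RCLike 𝕜] [NormedAddCommGroup E] [InnerProductSpace 𝕜 E]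
  [Fintype ι]

/-- `v ∈ 𝕜^ι ⊗ 𝕜^κ` is sent to `∑ⱼₗ vⱼₗ |l⟩ ⊗ Λʲ ∈ 𝕜^κ ⊗ E`, with `𝕜^κ ⊗ E` modelled as `κ → E`. -/
def tensorMap (Λ : ι → E) : (ι → κ → 𝕜) →ₗ[𝕜] PiLp 2 fun _ : κ => E where
  toFun v := WithLp.toLp 2 fun l => ∑ j, v j l • Λ j
  map_add' v w := by
    ext l
    simp [add_smul, Finset.sum_add_distrib]
  map_smul' c v := by
    ext l
    simp [mul_smul, Finset.smul_sum]

theorem inner_tensorMap [Fintype κ] (Λ : ι → E) (v w : ι → κ → 𝕜) :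
    ⟪tensorMap Λ v, tensorMap Λ w⟫_𝕜 = ∑ j, ∑ k, ∑ l, conj (v j l) * ⟪Λ j, Λ k⟫_𝕜 * w k l := by
  simp only [tensorMap, LinearMap.coe_mk, AddHom.coe_mk, PiLp.inner_apply,
    sum_inner, inner_sum, inner_smul_left, inner_smul_right, Finset.mul_sum]
  conv_rhs => rw [Finset.sum_comm_cycle]
  refine Finset.sum_congr rfl fun l _ => ?_
  rw [Finset.sum_comm]
  exact Finset.sum_congr rfl fun j _ => Finset.sum_congr rfl fun k _ => by ring

theorem tensorMap_injective {Λ : ι → E} (hΛ : LinearIndependent 𝕜 Λ) :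
    Function.Injective (tensorMap (𝕜 := 𝕜) (κ := κ) Λ) := by
  rw [← LinearMap.ker_eq_bot, LinearMap.ker_eq_bot']
  intro v hv
  funext j l
  exact Fintype.linearIndependent_iff.mp hΛ (fun j => v j l) (congrArg (· l) hv) j

end TensorMap

theorem card_le_finrank_of_pairwise_inner_map_eq_zero {𝕜 V E ι : Type*} [RCLike 𝕜]
    [AddCommGroup V] [Module 𝕜 V] [Module.Finite 𝕜 V] [NormedAddCommGroup E]
    [InnerProductSpace 𝕜 E] [Fintype ι] (L : V →ₗ[𝕜] E) (w : ι → V) (hw : ∀ i, L (w i) ≠ 0)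
    (horth : Pairwise fun i j => ⟪L (w i), L (w j)⟫_𝕜 = 0) :
    Fintype.card ι ≤ Module.finrank 𝕜 V :=
  (LinearIndependent.of_comp L
    (linearIndependent_of_ne_zero_of_inner_eq_zero (v := L ∘ w) hw horth)).fintype_card_le_finrank

theorem actU_eq_tensorMap (M : Matrix (Fin 2) (Fin 2) ℂ) (Λ : PiLp 2 fun _ : Fin 2 => H) :
    actU M Λ = tensorMap Λ Mᵀ :=
  rfl

/-- For an entangled quasicoherent state Λ ∈ ℂ² ⊗ H (reduced density matrix
ρ_Λ with det ρ_Λ ≠ 0), the form ⟨v, (ρ_Λᵀ ⊗ id) w⟩ on ℂ⁴ ≅ ℂ² ⊗ ℂ² is a positive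
definite inner product; consequently any family of pairwise orthogonal vectors of the
form (u ⊗ id_H)Λ with u ∈ U(2) has at most 4 elements. -/
theorem stmt19 (Λ : PiLp 2 fun _ : Fin 2 => H)
    (hdet : (Matrix.of fun j k => (inner ℂ (Λ k) (Λ j) : ℂ) :
      Matrix (Fin 2) (Fin 2) ℂ).det ≠ 0) :
    let ρ : Matrix (Fin 2) (Fin 2) ℂ := Matrix.of fun j k => (inner ℂ (Λ k) (Λ j) : ℂ)
    let B : (Fin 2 → Fin 2 → ℂ) → (Fin 2 → Fin 2 → ℂ) → ℂ := fun v w =>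
      ∑ j, ∑ k, ∑ l, (starRingEnd ℂ) (v j l) * ρ k j * w k l
    (∀ v w, B w v = (starRingEnd ℂ) (B v w)) ∧
    (∀ v, 0 ≤ (B v v).re ∧ (B v v).im = 0) ∧
    (∀ v, B v v = 0 → v = 0) ∧
    (∀ (ι : Type) (_ : Fintype ι) (u : ι → Matrix (Fin 2) (Fin 2) ℂ),
      (∀ i, (u i)ᴴ * u i = 1) →
      (∀ i i', i ≠ i' → (inner ℂ (actU (u i) Λ) (actU (u i') Λ) : ℂ) = 0) →
      Fintype.card ι ≤ 4) := by
  intro ρ B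
  set L : (Fin 2 → Fin 2 → ℂ) →ₗ[ℂ] PiLp 2 (fun _ : Fin 2 => H) := tensorMap Λ
  have hB : ∀ v w, B v w = ⟪L v, L w⟫_ℂ := fun v w => (inner_tensorMap _ v w).symm
  have hgram : (Matrix.gram ℂ Λ).det ≠ 0 := by rwa [← Matrix.det_transpose]
  have hL : Function.Injective L :=
    tensorMap_injective (linearIndependent_of_det_gram_ne_zero hgram)
  refine ⟨fun v w => by rw [hB, hB, inner_conj_symm], fun v => ?_, fun v hv => ?_, ?_⟩
  · rw [hB]
    exact ⟨RCLike.re_to_complex ▸ inner_self_nonneg, RCLike.im_to_complex ▸ inner_self_im _⟩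
  · exact hL (by rw [map_zero]; exact inner_self_eq_zero.mp (hB v v ▸ hv))
  · intro ι _ u hu horth
    have hu0 : ∀ i, L (u i)ᵀ ≠ 0 := fun i => (map_ne_zero_iff L hL).mpr fun h => by
      simpa [Matrix.transpose_eq_zero.mp h] using hu i
    have horth' : Pairwise fun i i' => ⟪L (u i)ᵀ, L (u i')ᵀ⟫_ℂ = 0 := fun i i' h => by
      simpa only [actU_eq_tensorMap] using horth i i' h
    simpa [Module.finrank_pi_fintype] using
      card_le_finrank_of_pairwise_inner_map_eq_zero L (fun i => (u i)ᵀ) hu0 horth'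

end
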